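/- arXiv:1604.01107 — 3 statements merged into one kernel-verified Lean document; each statement's English description precedes it below -/
import Mathlib

section
/- Let n ≥ 2, m_i > 0, r > 0, A > 0, let g : (0,∞) → ℝ be differentiable with g > 0 and g' < 0 on (0,∞), and let angles 0 ≤ α₁ < ... < α_n < 2π be given. For any ρ ∈ ℝ and γ ∈ ℝⁿ define Q(ρ, γ) = -2ρ²·A²·∑_i m_i + ∑_{i≠j} m_i m_j (2ρ·sin((α_i-α_j)/2) + r(γ_i-γ_j)·cos((α_i-α_j)/2))²·g'(2r·sin(|α_i-α_j|/2)) - ∑_{i≠j} m_i m_j (γ_i-γ_j)²·r·sin(|α_i-α_j|/2)·g(2r·sin(|α_i-α_j|/2)). Then Q(ρ, γ) ≤ 0, with equality if and only if ρ = 0 and all γ_i are equal. -/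
/-!
At a co-circular configuration every mutual distance `2 r sin(|αᵢ - αⱼ| / 2)` is a positive
chord, so the coefficients `mᵢ mⱼ g'(chord)` of the squares in the middle sum are negative and
the coefficients `mᵢ mⱼ r sin(…) g(chord)` of `(γᵢ - γⱼ)²` in the last sum are positive. The form
is therefore a sum of three nonpositive terms; the first vanishes only for `ρ = 0` and the last
only for constant `γ`, and these two conditions also kill the middle sum.
-/

open Finset

section HessianForm

variable {ι : Type*} [Fintype ι] [DecidableEq ι]

def hessianForm (c : ℝ) (a b u v : ι → ι → ℝ) (ρ : ℝ) (γ : ι → ℝ) : ℝ :=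
  -c * ρ ^ 2 + ∑ i, ∑ j ∈ univ.erase i, a i j * (ρ * u i j + (γ i - γ j) * v i j) ^ 2
    - ∑ i, ∑ j ∈ univ.erase i, b i j * (γ i - γ j) ^ 2

lemma sum_sum_erase_mul_sq_nonpos {a y : ι → ι → ℝ} (ha : ∀ i j, i ≠ j → a i j ≤ 0) :
    ∑ i, ∑ j ∈ univ.erase i, a i j * y i j ^ 2 ≤ 0 :=
  sum_nonpos fun i _ => sum_nonpos fun j hj =>
    mul_nonpos_of_nonpos_of_nonneg (ha i j (ne_of_mem_erase hj).symm) (sq_nonneg _)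

lemma sum_sum_erase_mul_sq_sub_nonneg {b : ι → ι → ℝ} (hb : ∀ i j, i ≠ j → 0 ≤ b i j)
    (x : ι → ℝ) : 0 ≤ ∑ i, ∑ j ∈ univ.erase i, b i j * (x i - x j) ^ 2 :=
  sum_nonneg fun i _ => sum_nonneg fun j hj =>
    mul_nonneg (hb i j (ne_of_mem_erase hj).symm) (sq_nonneg _)

lemma sum_sum_erase_mul_sq_sub_eq_zero_iff {b : ι → ι → ℝ} (hb : ∀ i j, i ≠ j → 0 < b i j)
    (x : ι → ℝ) :
    ∑ i, ∑ j ∈ univ.erase i, b i j * (x i - x j) ^ 2 = 0 ↔ ∀ i j, x i = x j := by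
  have hterm : ∀ i, ∀ j ∈ univ.erase i, 0 ≤ b i j * (x i - x j) ^ 2 := fun i j hj =>
    mul_nonneg (hb i j (ne_of_mem_erase hj).symm).le (sq_nonneg _)
  constructor
  · intro h i j
    obtain rfl | hij := eq_or_ne i j
    · rfl
    have hrow := (sum_eq_zero_iff_of_nonneg fun i _ => sum_nonneg (hterm i)).1 h i (mem_univ i)
    have hij_term := (sum_eq_zero_iff_of_nonneg (hterm i)).1 hrow j
      (mem_erase.2 ⟨hij.symm, mem_univ j⟩)
    have hsq := (mul_eq_zero.1 hij_term).resolve_left (hb i j hij).ne'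
    exact sub_eq_zero.1 (pow_eq_zero_iff two_ne_zero |>.1 hsq)
  · intro h
    have hsub : ∀ i j, x i - x j = 0 := fun i j => sub_eq_zero.2 (h i j)
    simp [hsub]

lemma hessianForm_nonpos {c : ℝ} (hc : 0 ≤ c) {a b : ι → ι → ℝ}
    (ha : ∀ i j, i ≠ j → a i j ≤ 0) (hb : ∀ i j, i ≠ j → 0 ≤ b i j) (u v : ι → ι → ℝ)
    (ρ : ℝ) (γ : ι → ℝ) : hessianForm c a b u v ρ γ ≤ 0 := by
  have hfirst : 0 ≤ c * ρ ^ 2 := by positivity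
  have hmid := sum_sum_erase_mul_sq_nonpos (y := fun i j => ρ * u i j + (γ i - γ j) * v i j) ha
  have hlast := sum_sum_erase_mul_sq_sub_nonneg hb γ
  unfold hessianForm
  linarith

lemma hessianForm_eq_zero_iff {c : ℝ} (hc : 0 < c) {a b : ι → ι → ℝ}
    (ha : ∀ i j, i ≠ j → a i j ≤ 0) (hb : ∀ i j, i ≠ j → 0 < b i j) (u v : ι → ι → ℝ)
    (ρ : ℝ) (γ : ι → ℝ) :
    hessianForm c a b u v ρ γ = 0 ↔ ρ = 0 ∧ ∀ i j, γ i = γ j := by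
  have hfirst : 0 ≤ c * ρ ^ 2 := by positivity
  have hmid := sum_sum_erase_mul_sq_nonpos (y := fun i j => ρ * u i j + (γ i - γ j) * v i j) ha
  have hlast := sum_sum_erase_mul_sq_sub_nonneg (fun i j hij => (hb i j hij).le) γ
  unfold hessianForm
  constructor
  · intro h
    have hfirst_eq : c * ρ ^ 2 = 0 := by linarith
    exact ⟨by simpa [hc.ne'] using hfirst_eq, (sum_sum_erase_mul_sq_sub_eq_zero_iff hb γ).1 (by linarith)⟩
  · rintro ⟨rfl, hγ⟩
    have hsub : ∀ i j, γ i - γ j = 0 := fun i j => sub_eq_zero.2 (hγ i j)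
    simp [hsub]

end HessianForm

lemma sin_half_abs_sub_pos {a b : ℝ} (ha₀ : 0 ≤ a) (ha : a < 2 * Real.pi) (hb₀ : 0 ≤ b)
    (hb : b < 2 * Real.pi) (hab : a ≠ b) : 0 < Real.sin (|a - b| / 2) := by
  apply Real.sin_pos_of_pos_of_lt_pi
  · have := abs_pos.2 (sub_ne_zero.2 hab)
    positivity
  · have : |a - b| < 2 * Real.pi := abs_sub_lt_iff.2 ⟨by linarith, by linarith⟩
    linarith

open Finset in
theorem hessian_quadratic_form_nonpos_general (n : ℕ) (hn : 2 ≤ n)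
    (m : Fin n → ℝ) (hm : ∀ i, 0 < m i) (r A : ℝ) (hr : 0 < r) (hA : 0 < A)
    (g g' : ℝ → ℝ)
    (hgpos : ∀ x : ℝ, 0 < x → 0 < g x) (hg'neg : ∀ x : ℝ, 0 < x → g' x < 0)
    (α : Fin n → ℝ) (hα0 : ∀ i, 0 ≤ α i) (hα2π : ∀ i, α i < 2 * Real.pi)
    (hmono : StrictMono α)
    (Q : ℝ → (Fin n → ℝ) → ℝ)
    (hQ : ∀ (ρ : ℝ) (γ : Fin n → ℝ), Q ρ γ =
      -2 * ρ ^ 2 * A ^ 2 * ∑ i, m i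
      + ∑ i, ∑ j ∈ univ.erase i, m i * m j *
          (2 * ρ * Real.sin ((α i - α j) / 2)
            + r * (γ i - γ j) * Real.cos ((α i - α j) / 2)) ^ 2 *
          g' (2 * r * Real.sin (|α i - α j| / 2))
      - ∑ i, ∑ j ∈ univ.erase i, m i * m j * (γ i - γ j) ^ 2 * r *
          Real.sin (|α i - α j| / 2) * g (2 * r * Real.sin (|α i - α j| / 2))) :
    ∀ (ρ : ℝ) (γ : Fin n → ℝ),
      Q ρ γ ≤ 0 ∧ (Q ρ γ = 0 ↔ ρ = 0 ∧ ∀ i j, γ i = γ j) := by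
  have hsin : ∀ i j, i ≠ j → 0 < Real.sin (|α i - α j| / 2) := fun i j hij =>
    sin_half_abs_sub_pos (hα0 i) (hα2π i) (hα0 j) (hα2π j) (hmono.injective.ne hij)
  have hchord : ∀ i j, i ≠ j → 0 < 2 * r * Real.sin (|α i - α j| / 2) := fun i j hij =>
    mul_pos (by positivity) (hsin i j hij)
  have hc : 0 < 2 * A ^ 2 * ∑ i, m i := by
    have : Nonempty (Fin n) := ⟨⟨0, by omega⟩⟩
    have := sum_pos (fun i _ => hm i) (univ_nonempty (α := Fin n))
    positivity
  have ha : ∀ i j, i ≠ j → m i * m j * g' (2 * r * Real.sin (|α i - α j| / 2)) ≤ 0 :=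
    fun i j hij => mul_nonpos_of_nonneg_of_nonpos (mul_pos (hm i) (hm j)).le
      (hg'neg _ (hchord i j hij)).le
  have hb : ∀ i j, i ≠ j → 0 < m i * m j * r * Real.sin (|α i - α j| / 2) *
      g (2 * r * Real.sin (|α i - α j| / 2)) := fun i j hij =>
    mul_pos (mul_pos (mul_pos (mul_pos (hm i) (hm j)) hr) (hsin i j hij))
      (hgpos _ (hchord i j hij))
  intro ρ γ
  have hQform : Q ρ γ = hessianForm (2 * A ^ 2 * ∑ i, m i)
      (fun i j => m i * m j * g' (2 * r * Real.sin (|α i - α j| / 2)))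
      (fun i j => m i * m j * r * Real.sin (|α i - α j| / 2) *
        g (2 * r * Real.sin (|α i - α j| / 2)))
      (fun i j => 2 * Real.sin ((α i - α j) / 2))
      (fun i j => r * Real.cos ((α i - α j) / 2)) ρ γ := by
    rw [hQ, hessianForm]
    congr 1
    · congr 1
      · ring
      · exact sum_congr rfl fun i _ => sum_congr rfl fun j _ => by ring
    · exact sum_congr rfl fun i _ => sum_congr rfl fun j _ => by ring
  rw [hQform]
  exact ⟨hessianForm_nonpos hc.le ha (fun i j hij => (hb i j hij).le) _ _ ρ γ,
    hessianForm_eq_zero_iff hc ha hb _ _ ρ γ⟩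

open Finset in
theorem hessian_quadratic_form_nonpos (n : ℕ) (hn : 2 ≤ n)
    (m : Fin n → ℝ) (hm : ∀ i, 0 < m i) (r A : ℝ) (hr : 0 < r) (hA : 0 < A)
    (g g' : ℝ → ℝ) (hderiv : ∀ x : ℝ, 0 < x → HasDerivAt g (g' x) x)
    (hgpos : ∀ x : ℝ, 0 < x → 0 < g x) (hg'neg : ∀ x : ℝ, 0 < x → g' x < 0)
    (α : Fin n → ℝ) (hα0 : ∀ i, 0 ≤ α i) (hα2π : ∀ i, α i < 2 * Real.pi)
    (hmono : StrictMono α)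
    (Q : ℝ → (Fin n → ℝ) → ℝ)
    (hQ : ∀ (ρ : ℝ) (γ : Fin n → ℝ), Q ρ γ =
      -2 * ρ ^ 2 * A ^ 2 * ∑ i, m i
      + ∑ i, ∑ j ∈ univ.erase i, m i * m j *
          (2 * ρ * Real.sin ((α i - α j) / 2)
            + r * (γ i - γ j) * Real.cos ((α i - α j) / 2)) ^ 2 *
          g' (2 * r * Real.sin (|α i - α j| / 2))
      - ∑ i, ∑ j ∈ univ.erase i, m i * m j * (γ i - γ j) ^ 2 * r *
          Real.sin (|α i - α j| / 2) * g (2 * r * Real.sin (|α i - α j| / 2))) :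
    ∀ (ρ : ℝ) (γ : Fin n → ℝ),
      Q ρ γ ≤ 0 ∧ (Q ρ γ = 0 ↔ ρ = 0 ∧ ∀ i j, γ i = γ j) :=
  hessian_quadratic_form_nonpos_general n hn m hm r A hr hA g g' hgpos hg'neg α hα0 hα2π hmono Q hQ
end

section
/- Let f : (0,∞) → ℝ be positive with x·f(x) strictly decreasing, let n ≥ 2, masses m_j > 0, A > 0, r > 0, and angles α_i. If Q_i = r(cos α_i, sin α_i) satisfy -A²Q_i = ∑_{j≠i} m_j (Q_j - Q_i) f(‖Q_j - Q_i‖) for all i, then for each i: m_i A² r = ∑_{j≠i} m_i m_j sin(|α_i-α_j|/2)·g(2r·sin(|α_i-α_j|/2)) and 0 = ∑_{j≠i} m_i m_j r·δ_{ij}·cos((α_i-α_j)/2)·g(2r·sin(|α_i-α_j|/2)), where g(x) = x·f(x) and δ_{ij} = sign(i - j). -/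
private lemma sinhalf_sq (x : ℝ) : Real.sin (x/2)^2 = (1 - Real.cos x)/2 := by
  have h := Real.cos_two_mul (x/2)
  have h2 := Real.sin_sq_add_cos_sq (x/2)
  have hx : (2:ℝ) * (x/2) = x := by ring
  rw [hx] at h
  linarith

open Finset in
theorem relative_equilibrium_equations (n : ℕ) (hn : 2 ≤ n)
    (f : ℝ → ℝ) (hf : ∀ x : ℝ, 0 < x → 0 < f x)
    (hanti : StrictAntiOn (fun x : ℝ => x * f x) (Set.Ioi 0))
    (m : Fin n → ℝ) (hm : ∀ j, 0 < m j) (A r : ℝ) (hA : 0 < A) (hr : 0 < r)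
    (α : Fin n → ℝ) (hα0 : ∀ i, 0 ≤ α i) (hα2π : ∀ i, α i < 2 * Real.pi)
    (hmono : StrictMono α)
    (Q : Fin n → EuclideanSpace ℝ (Fin 2))
    (hQ : ∀ i, Q i = ![r * Real.cos (α i), r * Real.sin (α i)])
    (heq : ∀ i, (-A ^ 2) • Q i
      = ∑ j ∈ univ.erase i, (m j * f ‖Q j - Q i‖) • (Q j - Q i)) :
    ∀ i,
      (m i * A ^ 2 * r = ∑ j ∈ univ.erase i,
        m i * m j * Real.sin (|α i - α j| / 2) *
          ((2 * r * Real.sin (|α i - α j| / 2)) *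
            f (2 * r * Real.sin (|α i - α j| / 2)))) ∧
      (0 = ∑ j ∈ univ.erase i,
        m i * m j * r * (if j < i then (1 : ℝ) else -1) * Real.cos ((α i - α j) / 2) *
          ((2 * r * Real.sin (|α i - α j| / 2)) *
            f (2 * r * Real.sin (|α i - α j| / 2)))) := by
  intro i
  have hr' : r ≠ 0 := ne_of_gt hr
  -- distance formula
  have hdist : ∀ j : Fin n, ‖Q j - Q i‖ = 2 * r * Real.sin (|α i - α j| / 2) := by
    intro j
    have hsq : Real.sin (|α i - α j| / 2) ^ 2 = Real.sin ((α i - α j) / 2) ^ 2 := by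
      rcases abs_cases (α i - α j) with ⟨h, _⟩ | ⟨h, _⟩
      · rw [h]
      · rw [h, neg_div, Real.sin_neg]; ring
    have hs2 := sinhalf_sq (α i - α j)
    have hnn : 0 ≤ 2 * r * Real.sin (|α i - α j| / 2) := by
      have h1 : 0 ≤ |α i - α j| / 2 := by positivity
      have h2 : |α i - α j| / 2 ≤ Real.pi := by
        have hpi := Real.pi_pos
        have habs : |α i - α j| < 2 * Real.pi := by
          have := hα0 i; have := hα0 j; have := hα2π i; have := hα2π j
          rw [abs_sub_lt_iff]; constructor <;> linarith
        linarith
      have := Real.sin_nonneg_of_nonneg_of_le_pi h1 h2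
      positivity
    rw [EuclideanSpace.norm_eq]
    rw [show (∑ k, ‖(Q j - Q i) k‖ ^ 2)
        = (2 * r * Real.sin (|α i - α j| / 2)) ^ 2 from ?_, Real.sqrt_sq hnn]
    simp only [Fin.sum_univ_two, PiLp.sub_apply, hQ i, hQ j, Pi.sub_apply, Matrix.cons_val_zero, Matrix.cons_val_one,
      Matrix.head_cons, Real.norm_eq_abs, sq_abs]
    have hc := Real.cos_sub (α i) (α j)
    have h1 := Real.sin_sq_add_cos_sq (α i)
    have h2 := Real.sin_sq_add_cos_sq (α j)
    linear_combination r^2*h1 + r^2*h2 + 2*r^2*hc - 4*r^2*hsq - 4*r^2*hs2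
  -- inner products
  have hip : ∀ (a b : ℝ) (k : Fin n),
      (inner (𝕜 := ℝ) (E := EuclideanSpace ℝ (Fin 2)) !₂[a, b] (Q k))
        = a * (r * Real.cos (α k)) + b * (r * Real.sin (α k)) := by
    intro a b k
    simp [PiLp.inner_apply, RCLike.inner_apply, Fin.sum_univ_two, hQ k]
    ring
  have key : ∀ (u : EuclideanSpace ℝ (Fin 2)),
      (inner (𝕜 := ℝ) u ((-A ^ 2) • Q i))
        = ∑ j ∈ univ.erase i, (m j * f ‖Q j - Q i‖) *
            ((inner (𝕜 := ℝ) u (Q j) : ℝ) - (inner (𝕜 := ℝ) u (Q i) : ℝ)) := by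
    intro u
    rw [heq i, inner_sum]
    refine Finset.sum_congr rfl fun j hj => ?_
    rw [real_inner_smul_right, inner_sub_right]
  constructor
  · -- radial
    have hkey := key !₂[r * Real.cos (α i), r * Real.sin (α i)]
    rw [real_inner_smul_right] at hkey
    simp only [hip] at hkey
    have hsum : r * ∑ j ∈ univ.erase i,
        m i * m j * Real.sin (|α i - α j| / 2) *
          ((2 * r * Real.sin (|α i - α j| / 2)) *
            f (2 * r * Real.sin (|α i - α j| / 2)))
        = (-(m i)) * ∑ j ∈ univ.erase i, (m j * f ‖Q j - Q i‖) *
            ((r * Real.cos (α i) * (r * Real.cos (α j)) +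
              r * Real.sin (α i) * (r * Real.sin (α j))) -
             (r * Real.cos (α i) * (r * Real.cos (α i)) +
              r * Real.sin (α i) * (r * Real.sin (α i)))) := by
      rw [Finset.mul_sum, Finset.mul_sum]
      refine Finset.sum_congr rfl fun j hj => ?_
      rw [hdist j]
      set F := f (2 * r * Real.sin (|α i - α j| / 2)) with hF
      have hsq : Real.sin (|α i - α j| / 2) ^ 2 = (1 - Real.cos (α i - α j))/2 := by
        rcases abs_cases (α i - α j) with ⟨h, _⟩ | ⟨h, _⟩
        · rw [h, sinhalf_sq]
        · rw [h, neg_div, Real.sin_neg, neg_pow, sinhalf_sq]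
          simp [Real.cos_neg]
      have hc := Real.cos_sub (α i) (α j)
      have hsc := Real.sin_sq_add_cos_sq (α i)
      linear_combination (2 * m i * m j * r^2 * F) * hsq - (m i * m j * r^2 * F) * hc
        - (m i * m j * r^2 * F) * hsc
    rw [← hkey] at hsum
    have h1 := Real.sin_sq_add_cos_sq (α i)
    refine mul_left_cancel₀ hr' ?_
    rw [hsum]
    linear_combination (-(m i * A^2 * r^2)) * h1
  · -- tangential
    have hkey := key !₂[-(r * Real.sin (α i)), r * Real.cos (α i)]
    rw [real_inner_smul_right] at hkey
    simp only [hip] at hkey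
    have hsum : ∑ j ∈ univ.erase i,
        m i * m j * r * (if j < i then (1 : ℝ) else -1) * Real.cos ((α i - α j) / 2) *
          ((2 * r * Real.sin (|α i - α j| / 2)) *
            f (2 * r * Real.sin (|α i - α j| / 2)))
        = (-(m i)) * ∑ j ∈ univ.erase i, (m j * f ‖Q j - Q i‖) *
            ((-(r * Real.sin (α i)) * (r * Real.cos (α j)) +
              r * Real.cos (α i) * (r * Real.sin (α j))) -
             (-(r * Real.sin (α i)) * (r * Real.cos (α i)) +
              r * Real.cos (α i) * (r * Real.sin (α i)))) := by
      rw [Finset.mul_sum]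
      refine Finset.sum_congr rfl fun j hj => ?_
      have hji : j ≠ i := Finset.ne_of_mem_erase hj
      rw [hdist j]
      have hssub := Real.sin_sub (α i) (α j)
      have hsin2 : Real.sin (α i - α j)
          = 2 * Real.sin ((α i - α j)/2) * Real.cos ((α i - α j)/2) := by
        have := Real.sin_two_mul ((α i - α j)/2)
        rw [show 2 * ((α i - α j)/2) = α i - α j by ring] at this
        linarith
      by_cases hlt : j < i
      · have hpos : 0 < α i - α j := sub_pos.mpr (hmono hlt)
        rw [if_pos hlt, abs_of_pos hpos]
        generalize f (2 * r * Real.sin ((α i - α j) / 2)) = F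
        linear_combination (-(m i * m j * r^2 * F)) * hsin2 + (m i * m j * r^2 * F) * hssub
      · have hlt' : i < j := lt_of_le_of_ne (not_lt.mp hlt) (Ne.symm hji)
        have hneg : α i - α j < 0 := sub_neg.mpr (hmono hlt')
        rw [if_neg hlt, abs_of_neg hneg, neg_div, Real.sin_neg]
        generalize f (2 * r * -Real.sin ((α i - α j) / 2)) = F
        linear_combination (-(m i * m j * r^2 * F)) * hsin2 + (m i * m j * r^2 * F) * hssub
    rw [hsum, ← hkey]
    ring
end

section
/- Let g : (0,∞) → ℝ be differentiable with g > 0 and g' < 0, let N ≥ 2, masses m_i > 0 for i ∈ {1,...,N}, an extra mass m > 0 (the central mass), A > 0, r > 0 with A²r - m·g(r) equal to ∑_{j≠i} m_j sin(|α_i-α_j|/2) g(2r sin(|α_i-α_j|/2)) > 0 for each i. Then for all ρ ∈ ℝ, γ ∈ ℝ^N, the quadratic form -2ρ² (A² - m·g'(r)) ∑_i m_i + ∑_{i≠j} m_i m_j (2ρ sin((α_i-α_j)/2) + r(γ_i-γ_j) cos((α_i-α_j)/2))² g'(2r sin(|α_i-α_j|/2)) - ∑_{i≠j} m_i m_j (γ_i-γ_j)²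 r sin(|α_i-α_j|/2) g(2r sin(|α_i-α_j|/2)) is ≤ 0, with equality iff ρ = 0 and all γ_i equal. -/
/-!
For `i ≠ j` the angles satisfy `0 < |α i - α j| / 2 < π`, so every chord factor
`sin (|α i - α j| / 2)` is positive. The form then splits into three pieces of fixed sign: the
radial term `-2ρ² (A² - mc g'(r)) ∑ mᵢ` (nonpositive, as `mc g'(r) < 0`), the sum weighted by
`g' < 0`, and minus the sum of `(γᵢ - γⱼ)²` with positive weights. The form vanishes exactly when
all three do, i.e. when `ρ = 0` and the `γᵢ` coincide.
-/

open Finset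

lemma Real.sin_half_abs_sub_pos {x y : ℝ} (hx₀ : 0 ≤ x) (hx : x < 2 * Real.pi) (hy₀ : 0 ≤ y)
    (hy : y < 2 * Real.pi) (hxy : x ≠ y) : 0 < Real.sin (|x - y| / 2) := by
  have hpos : 0 < |x - y| := abs_pos.mpr (sub_ne_zero.mpr hxy)
  have hlt : |x - y| < 2 * Real.pi := abs_sub_lt_iff.mpr ⟨by linarith, by linarith⟩
  exact Real.sin_pos_of_pos_of_lt_pi (by positivity) (by linarith)

lemma add_sub_nonpos_and_eq_zero_iff {a b c : ℝ} {p q : Prop} (ha : a ≤ 0) (hb : b ≤ 0)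
    (hc : 0 ≤ c) (ha0 : a = 0 ↔ p) (hc0 : c = 0 ↔ q) (hb0 : p → q → b = 0) :
    a + b - c ≤ 0 ∧ (a + b - c = 0 ↔ p ∧ q) := by
  refine ⟨by linarith, fun h => ⟨ha0.mp (by linarith), hc0.mp (by linarith)⟩, ?_⟩
  rintro ⟨hp, hq⟩
  rw [ha0.mpr hp, hb0 hp hq, hc0.mpr hq]
  norm_num

section OffDiagonal

variable {ι : Type*} [Fintype ι] [DecidableEq ι] {f : ι → ι → ℝ}

lemma sum_sum_erase_nonneg (hf : ∀ i j, i ≠ j → 0 ≤ f i j) :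
    0 ≤ ∑ i, ∑ j ∈ univ.erase i, f i j :=
  sum_nonneg fun i _ => sum_nonneg fun j hj => hf i j (ne_of_mem_erase hj).symm

lemma sum_sum_erase_nonpos (hf : ∀ i j, i ≠ j → f i j ≤ 0) :
    ∑ i, ∑ j ∈ univ.erase i, f i j ≤ 0 :=
  sum_nonpos fun i _ => sum_nonpos fun j hj => hf i j (ne_of_mem_erase hj).symm

lemma sum_sum_erase_eq_zero_iff (hf : ∀ i j, i ≠ j → 0 ≤ f i j) :
    ∑ i, ∑ j ∈ univ.erase i, f i j = 0 ↔ ∀ i j, i ≠ j → f i j = 0 := by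
  rw [sum_eq_zero_iff_of_nonneg fun i _ => sum_nonneg fun j hj => hf i j (ne_of_mem_erase hj).symm]
  refine forall_congr' fun i => ?_
  rw [sum_eq_zero_iff_of_nonneg fun j hj => hf i j (ne_of_mem_erase hj).symm]
  simp only [mem_univ, mem_erase, and_true, true_implies, ne_comm]

lemma sum_sum_erase_eq_zero_iff_forall_eq {α : Type*} {γ : ι → α}
    (hf : ∀ i j, i ≠ j → 0 ≤ f i j) (hf0 : ∀ i j, i ≠ j → (f i j = 0 ↔ γ i = γ j)) :
    ∑ i, ∑ j ∈ univ.erase i, f i j = 0 ↔ ∀ i j, γ i = γ j := by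
  rw [sum_sum_erase_eq_zero_iff hf]
  refine forall₂_congr fun i j => ?_
  rcases eq_or_ne i j with rfl | hij
  · simp
  · simp [hij, hf0 i j hij]

end OffDiagonal

open Finset in
theorem hessian_quadratic_form_central_mass_general (N : ℕ) (hN : 2 ≤ N)
    (m : Fin N → ℝ) (hm : ∀ i, 0 < m i) (mc : ℝ) (hmc : 0 < mc)
    (r A : ℝ) (hr : 0 < r)
    (g g' : ℝ → ℝ)
    (hgpos : ∀ x : ℝ, 0 < x → 0 < g x) (hg'neg : ∀ x : ℝ, 0 < x → g' x < 0)
    (α : Fin N → ℝ) (hα0 : ∀ i, 0 ≤ α i) (hα2π : ∀ i, α i < 2 * Real.pi)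
    (hmono : StrictMono α) :
    ∀ (ρ : ℝ) (γ : Fin N → ℝ),
      (-2 * ρ ^ 2 * (A ^ 2 - mc * g' r) * ∑ i, m i
        + ∑ i, ∑ j ∈ univ.erase i, m i * m j *
            (2 * ρ * Real.sin ((α i - α j) / 2)
              + r * (γ i - γ j) * Real.cos ((α i - α j) / 2)) ^ 2 *
            g' (2 * r * Real.sin (|α i - α j| / 2))
        - ∑ i, ∑ j ∈ univ.erase i, m i * m j * (γ i - γ j) ^ 2 * r *
            Real.sin (|α i - α j| / 2) * g (2 * r * Real.sin (|α i - α j| / 2)) ≤ 0)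
      ∧ ((-2 * ρ ^ 2 * (A ^ 2 - mc * g' r) * ∑ i, m i
        + ∑ i, ∑ j ∈ univ.erase i, m i * m j *
            (2 * ρ * Real.sin ((α i - α j) / 2)
              + r * (γ i - γ j) * Real.cos ((α i - α j) / 2)) ^ 2 *
            g' (2 * r * Real.sin (|α i - α j| / 2))
        - ∑ i, ∑ j ∈ univ.erase i, m i * m j * (γ i - γ j) ^ 2 * r *
            Real.sin (|α i - α j| / 2) * g (2 * r * Real.sin (|α i - α j| / 2)) = 0)
        ↔ ρ = 0 ∧ ∀ i j, γ i = γ j) := by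
  have hsin : ∀ i j, i ≠ j → 0 < Real.sin (|α i - α j| / 2) := fun i j hij =>
    Real.sin_half_abs_sub_pos (hα0 i) (hα2π i) (hα0 j) (hα2π j) (hmono.injective.ne hij)
  have hg : ∀ i j, i ≠ j → 0 < g (2 * r * Real.sin (|α i - α j| / 2)) := fun i j hij =>
    hgpos _ (by have := hsin i j hij; positivity)
  have hg' : ∀ i j, i ≠ j → g' (2 * r * Real.sin (|α i - α j| / 2)) < 0 := fun i j hij =>
    hg'neg _ (by have := hsin i j hij; positivity)
  have hstiff : 0 < A ^ 2 - mc * g' r := by nlinarith [hg'neg r hr, sq_nonneg A]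
  have hmass : 0 < ∑ i, m i := sum_pos (fun i _ => hm i) ⟨⟨0, by omega⟩, mem_univ _⟩
  intro ρ γ
  refine add_sub_nonpos_and_eq_zero_iff ?_ ?_ ?_ ?_ ?_ ?_
  · nlinarith [mul_nonneg (sq_nonneg ρ) (mul_pos hstiff hmass).le]
  · exact sum_sum_erase_nonpos fun i j hij =>
      mul_nonpos_of_nonneg_of_nonpos (by have := hm i; have := hm j; positivity) (hg' i j hij).le
  · exact sum_sum_erase_nonneg fun i j hij => by
      have := hm i; have := hm j; have := hsin i j hij; have := hg i j hij; positivity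
  · simp [hstiff.ne', hmass.ne']
  · refine sum_sum_erase_eq_zero_iff_forall_eq (fun i j hij => ?_) (fun i j hij => ?_)
    · have := hm i; have := hm j; have := hsin i j hij; have := hg i j hij; positivity
    · simp [(hm i).ne', (hm j).ne', hr.ne', (hsin i j hij).ne', (hg i j hij).ne', sub_eq_zero]
  · rintro rfl hγ
    exact sum_eq_zero fun i _ => sum_eq_zero fun j _ => by simp [hγ i j]

open Finset in
theorem hessian_quadratic_form_central_mass (N : ℕ) (hN : 2 ≤ N)
    (m : Fin N → ℝ) (hm : ∀ i, 0 < m i) (mc : ℝ) (hmc : 0 < mc)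
    (r A : ℝ) (hr : 0 < r) (hA : 0 < A)
    (g g' : ℝ → ℝ) (hderiv : ∀ x : ℝ, 0 < x → HasDerivAt g (g' x) x)
    (hgpos : ∀ x : ℝ, 0 < x → 0 < g x) (hg'neg : ∀ x : ℝ, 0 < x → g' x < 0)
    (α : Fin N → ℝ) (hα0 : ∀ i, 0 ≤ α i) (hα2π : ∀ i, α i < 2 * Real.pi)
    (hmono : StrictMono α)
    (hbal : ∀ i, A ^ 2 * r - mc * g r =
      ∑ j ∈ univ.erase i, m j * Real.sin (|α i - α j| / 2) *
        g (2 * r * Real.sin (|α i - α j| / 2)))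
    (hpos : 0 < A ^ 2 * r - mc * g r) :
    ∀ (ρ : ℝ) (γ : Fin N → ℝ),
      (-2 * ρ ^ 2 * (A ^ 2 - mc * g' r) * ∑ i, m i
        + ∑ i, ∑ j ∈ univ.erase i, m i * m j *
            (2 * ρ * Real.sin ((α i - α j) / 2)
              + r * (γ i - γ j) * Real.cos ((α i - α j) / 2)) ^ 2 *
            g' (2 * r * Real.sin (|α i - α j| / 2))
        - ∑ i, ∑ j ∈ univ.erase i, m i * m j * (γ i - γ j) ^ 2 * r *
            Real.sin (|α i - α j| / 2) * g (2 * r * Real.sin (|α i - α j| / 2)) ≤ 0)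
      ∧ ((-2 * ρ ^ 2 * (A ^ 2 - mc * g' r) * ∑ i, m i
        + ∑ i, ∑ j ∈ univ.erase i, m i * m j *
            (2 * ρ * Real.sin ((α i - α j) / 2)
              + r * (γ i - γ j) * Real.cos ((α i - α j) / 2)) ^ 2 *
            g' (2 * r * Real.sin (|α i - α j| / 2))
        - ∑ i, ∑ j ∈ univ.erase i, m i * m j * (γ i - γ j) ^ 2 * r *
            Real.sin (|α i - α j| / 2) * g (2 * r * Real.sin (|α i - α j| / 2)) = 0)
        ↔ ρ = 0 ∧ ∀ i j, γ i = γ j) :=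
  hessian_quadratic_form_central_mass_general N hN m hm mc hmc r A hr g g' hgpos hg'neg α hα0 hα2π
    hmono
end
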